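/- Let $\xi = (\xi_1, \xi_2, \xi_3) \in \mathbb{R}^3$ and $\xi_{S,3} \in \mathbb{R}$ with $\mu > 0$, $\lambda + 2\mu > 0$, $\rho > 0$, $\xi_3 > 0$, $\xi_{S,3} > 0$, $\xi_1^2 + \xi_2^2 + \xi_3^2 = \rho/(\lambda+2\mu)$ (i.e. $|\xi| = c_P^{-1}$), $\xi_1^2 + \xi_2^2 + \xi_{S,3}^2 = \rho/\mu$ (i.e. the S-covector has length $c_S^{-1}$), and $(\xi_1,\xi_2) \neq (0,0)$. Then the $4\times 4$ matrix $M_P(\xi) = \begin{pmatrix} -2\mu\xi_1\xi_3 & -\mu\xi_{S,3} & 0 & \mu\xi_1 \\ -2\mu\xi_2\xi_3 & 0 & -\mu\xi_{S,3} & \mu\xi_2 \\ \rho - 2\mu(\xi_1^2+\xi_2^2) & \lambda\xi_1 & \lambda\xi_2 & -(\lambda+2\mu)\xi_{S,3} \\ 0 & \xi_1 & \xi_2 & -\xi_{S,3} \end{pmatrix}$ is invertible. -/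

import Mathlib

/-!
With `r = ξ1² + ξ2²`, expanding along the first row gives
`det M_P = μ² ξS3 ((r - ξS3²)(ρ - 2μr) - 4μ r ξ3 ξS3)`, independent of `λ`.
The S-wave dispersion relation `ρ = μ (r + ξS3²)` turns `ρ - 2μr` into `μ (ξS3² - r)`, so
`det M_P = -μ³ ξS3 ((ξS3² - r)² + 4 r ξ3 ξS3)`, which is nonzero as soon as `r > 0`.
-/

def reflectionMatrixP (μ lam rho ξ1 ξ2 ξ3 ξS3 : ℝ) : Matrix (Fin 4) (Fin 4) ℝ :=
  !![-2 * μ * ξ1 * ξ3, -(μ * ξS3), 0, μ * ξ1;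
     -2 * μ * ξ2 * ξ3, 0, -(μ * ξS3), μ * ξ2;
     rho - 2 * μ * (ξ1 ^ 2 + ξ2 ^ 2), lam * ξ1, lam * ξ2, -((lam + 2 * μ) * ξS3);
     0, ξ1, ξ2, -ξS3]

theorem det_reflectionMatrixP (μ lam rho ξ1 ξ2 ξ3 ξS3 : ℝ) :
    (reflectionMatrixP μ lam rho ξ1 ξ2 ξ3 ξS3).det =
      μ ^ 2 * ξS3 * ((ξ1 ^ 2 + ξ2 ^ 2 - ξS3 ^ 2) * (rho - 2 * μ * (ξ1 ^ 2 + ξ2 ^ 2))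
        - 4 * μ * (ξ1 ^ 2 + ξ2 ^ 2) * ξ3 * ξS3) := by
  rw [reflectionMatrixP, Matrix.det_succ_row_zero, Fin.sum_univ_four]
  simp only [Matrix.det_fin_three, Matrix.submatrix_apply, Matrix.of_apply, Matrix.cons_val',
    Matrix.cons_val, Matrix.cons_val_fin_one, Fin.succAbove, Fin.reduceSucc, Fin.reduceCastSucc,
    Fin.reduceLT, ↓reduceIte, Fin.isValue, Fin.coe_ofNat_eq_mod]
  ring

theorem det_reflectionMatrixP_of_rho_eq {μ lam rho ξ1 ξ2 ξ3 ξS3 : ℝ}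
    (hrho : rho = μ * (ξ1 ^ 2 + ξ2 ^ 2 + ξS3 ^ 2)) :
    (reflectionMatrixP μ lam rho ξ1 ξ2 ξ3 ξS3).det =
      -(μ ^ 3 * ξS3 * ((ξS3 ^ 2 - (ξ1 ^ 2 + ξ2 ^ 2)) ^ 2 + 4 * (ξ1 ^ 2 + ξ2 ^ 2) * ξ3 * ξS3)) := by
  rw [det_reflectionMatrixP, hrho]
  ring

theorem sq_add_sq_pos_of_ne_zero {R : Type*} [CommRing R] [LinearOrder R] [IsStrictOrderedRing R]
    {a b : R} (h : (a, b) ≠ (0, 0)) : 0 < a ^ 2 + b ^ 2 := by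
  refine (add_nonneg (sq_nonneg a) (sq_nonneg b)).lt_of_ne' fun h0 => h ?_
  rw [sq, sq, mul_self_add_mul_self_eq_zero] at h0
  rw [h0.1, h0.2]

theorem MP_invertible_general (μ lam rho ξ1 ξ2 ξ3 ξS3 : ℝ)
    (hμ : 0 < μ)
    (hξ3 : 0 < ξ3) (hξS3 : 0 < ξS3)
    (hS : ξ1 ^ 2 + ξ2 ^ 2 + ξS3 ^ 2 = rho / μ)
    (htan : (ξ1, ξ2) ≠ (0, 0)) :
    IsUnit (!![-2 * μ * ξ1 * ξ3, -(μ * ξS3), 0, μ * ξ1;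
               -2 * μ * ξ2 * ξ3, 0, -(μ * ξS3), μ * ξ2;
               rho - 2 * μ * (ξ1 ^ 2 + ξ2 ^ 2), lam * ξ1, lam * ξ2, -((lam + 2 * μ) * ξS3);
               0, ξ1, ξ2, -ξS3] : Matrix (Fin 4) (Fin 4) ℝ) := by
  change IsUnit (reflectionMatrixP μ lam rho ξ1 ξ2 ξ3 ξS3)
  have hrho : rho = μ * (ξ1 ^ 2 + ξ2 ^ 2 + ξS3 ^ 2) := by rw [hS, mul_div_cancel₀ _ hμ.ne']
  have hr : 0 < ξ1 ^ 2 + ξ2 ^ 2 := sq_add_sq_pos_of_ne_zero htan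
  have hbracket : 0 < (ξS3 ^ 2 - (ξ1 ^ 2 + ξ2 ^ 2)) ^ 2 + 4 * (ξ1 ^ 2 + ξ2 ^ 2) * ξ3 * ξS3 :=
    add_pos_of_nonneg_of_pos (sq_nonneg _) (mul_pos (mul_pos (mul_pos four_pos hr) hξ3) hξS3)
  rw [Matrix.isUnit_iff_isUnit_det, isUnit_iff_ne_zero, det_reflectionMatrixP_of_rho_eq hrho]
  exact neg_ne_zero.mpr (mul_pos (mul_pos (pow_pos hμ 3) hξS3) hbracket).ne'

theorem MP_invertible (μ lam rho ξ1 ξ2 ξ3 ξS3 : ℝ)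
    (hμ : 0 < μ) (hlam : 0 < lam + 2 * μ) (hrho : 0 < rho)
    (hξ3 : 0 < ξ3) (hξS3 : 0 < ξS3)
    (hP : ξ1 ^ 2 + ξ2 ^ 2 + ξ3 ^ 2 = rho / (lam + 2 * μ))
    (hS : ξ1 ^ 2 + ξ2 ^ 2 + ξS3 ^ 2 = rho / μ)
    (htan : (ξ1, ξ2) ≠ (0, 0)) :
    IsUnit (!![-2 * μ * ξ1 * ξ3, -(μ * ξS3), 0, μ * ξ1;
               -2 * μ * ξ2 * ξ3, 0, -(μ * ξS3), μ * ξ2;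
               rho - 2 * μ * (ξ1 ^ 2 + ξ2 ^ 2), lam * ξ1, lam * ξ2, -((lam + 2 * μ) * ξS3);
               0, ξ1, ξ2, -ξS3] : Matrix (Fin 4) (Fin 4) ℝ) :=
  MP_invertible_general μ lam rho ξ1 ξ2 ξ3 ξS3 hμ hξ3 hξS3 hS htan
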